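/- Let y > 0, H a probability distribution supported on [0, τ] with τ < ∞, and for z₁, z₂ ∈ ℂ⁺ let s₁ = s(z₁), s₂ = s(z₂) be the solutions of the self-consistent equation s = −(z − y∫ t(1+ts)^{-1} dH(t))^{-1}. Define a(z₁,z₂) = y s₁ s₂ ∫ t² / ((1 + t s₁)(1 + t s₂)) dH(t). Then |a(z₁,z₂)| ≤ ( A₁/(Im z₁ + A₁) )^{1/2} · ( A₂/(Im z₂ + A₂) )^{1/2} < 1, where A_i = Im s_i · y ∫ t²/|1 + t s_i|² dH(t). -/

import Mathlib

/-!
Cauchy–Schwarz bounds `|∫ t² / ((1 + t s₁)(1 + t s₂)) dH|` by `√B₁ √B₂`, where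
`Bᵢ = ∫ t² / |1 + t sᵢ|² dH`. Taking imaginary parts in `-1/s = z - y ∫ t / (1 + t s) dH`
gives `Im s / |s|² = Im z + A`, so `A / (Im z + A) = y |s|² B` and the claimed bound is exactly
`|a| ≤ y |s₁| |s₂| √B₁ √B₂`. Each factor is `< 1` because `Im z > 0` and `A ≥ 0`.
-/

open MeasureTheory

section CauchySchwarz

variable {α 𝕜 : Type*} [MeasurableSpace α] {μ : Measure α} [RCLike 𝕜]

theorem norm_integral_mul_le_sqrt_mul_sqrt {f g : α → 𝕜}
    (hf : AEStronglyMeasurable f μ) (hg : AEStronglyMeasurable g μ)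
    (hf2 : Integrable (fun x => ‖f x‖ ^ 2) μ) (hg2 : Integrable (fun x => ‖g x‖ ^ 2) μ) :
    ‖∫ x, f x * g x ∂μ‖ ≤
      Real.sqrt (∫ x, ‖f x‖ ^ 2 ∂μ) * Real.sqrt (∫ x, ‖g x‖ ^ 2 ∂μ) := by
  have hf' : MemLp (fun x => ‖f x‖) (ENNReal.ofReal 2) μ := by
    rw [ENNReal.ofReal_ofNat]
    exact (memLp_two_iff_integrable_sq hf.norm).2 hf2
  have hg' : MemLp (fun x => ‖g x‖) (ENNReal.ofReal 2) μ := by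
    rw [ENNReal.ofReal_ofNat]
    exact (memLp_two_iff_integrable_sq hg.norm).2 hg2
  have holder := integral_mul_le_Lp_mul_Lq_of_nonneg Real.HolderConjugate.two_two
    (.of_forall fun x => norm_nonneg (f x)) (.of_forall fun x => norm_nonneg (g x))
    hf' hg'
  simp only [Real.rpow_two, ← Real.sqrt_eq_rpow] at holder
  calc ‖∫ x, f x * g x ∂μ‖ ≤ ∫ x, ‖f x * g x‖ ∂μ := norm_integral_le_integral_norm _
    _ = ∫ x, ‖f x‖ * ‖g x‖ ∂μ := by simp only [norm_mul]
    _ ≤ _ := holder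

end CauchySchwarz

theorem Complex.im_neg_inv (s : ℂ) : (-s⁻¹).im = s.im / Complex.normSq s := by
  rw [Complex.neg_im, Complex.inv_im, neg_div, neg_neg]

theorem Complex.im_ofReal_div_one_add_ofReal_mul (s : ℂ) (t : ℝ) :
    ((t : ℂ) / (1 + t * s)).im = -s.im * (t ^ 2 / ‖1 + (t : ℂ) * s‖ ^ 2) := by
  rw [Complex.div_im, Complex.sq_norm]
  simp only [Complex.ofReal_im, Complex.add_re, Complex.one_re, Complex.mul_re,
    Complex.ofReal_re, zero_mul, sub_zero, zero_div, Complex.add_im, Complex.one_im,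
    Complex.mul_im, add_zero, zero_add, zero_sub, neg_mul, neg_inj]
  ring

theorem Complex.norm_ofReal_div_one_add_ofReal_mul_sq (s : ℂ) (t : ℝ) :
    ‖(t : ℂ) / (1 + t * s)‖ ^ 2 = t ^ 2 / ‖1 + (t : ℂ) * s‖ ^ 2 := by
  rw [norm_div, div_pow, Complex.norm_real, Real.norm_eq_abs, sq_abs]

theorem im_integral_div_one_add_mul {H : Measure ℝ} {s : ℂ}
    (hi : Integrable (fun t : ℝ => (t : ℂ) / (1 + t * s)) H) :
    (∫ t, (t : ℂ) / (1 + t * s) ∂H).im =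
      -s.im * ∫ t, t ^ 2 / ‖1 + (t : ℂ) * s‖ ^ 2 ∂H := by
  rw [← integral_const_mul, ← Complex.imCLM_apply, ← Complex.imCLM.integral_comp_comm hi]
  simp only [Complex.imCLM_apply, Complex.im_ofReal_div_one_add_ofReal_mul]

theorem im_div_normSq_of_eq_neg_inv {y : ℝ} {H : Measure ℝ} {z s : ℂ}
    (hi : Integrable (fun t : ℝ => (t : ℂ) / (1 + t * s)) H)
    (heq : s = -(z - y * ∫ t, (t : ℂ) / (1 + t * s) ∂H)⁻¹) :
    z.im + s.im * (y * ∫ t, t ^ 2 / ‖1 + (t : ℂ) * s‖ ^ 2 ∂H) =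
      s.im / Complex.normSq s := by
  have hw : z - y * ∫ t, (t : ℂ) / (1 + t * s) ∂H = -s⁻¹ := by
    conv_rhs => rw [heq, inv_neg, inv_inv, neg_neg]
  rw [← Complex.im_neg_inv, ← hw, Complex.sub_im, Complex.im_ofReal_mul,
    im_integral_div_one_add_mul hi]
  ring

theorem norm_integral_sq_div_le {H : Measure ℝ} {s₁ s₂ : ℂ}
    (hi₁ : Integrable (fun t : ℝ => t ^ 2 / ‖1 + (t : ℂ) * s₁‖ ^ 2) H)
    (hi₂ : Integrable (fun t : ℝ => t ^ 2 / ‖1 + (t : ℂ) * s₂‖ ^ 2) H) :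
    ‖∫ t, (t : ℂ) ^ 2 / ((1 + t * s₁) * (1 + t * s₂)) ∂H‖ ≤
      Real.sqrt (∫ t, t ^ 2 / ‖1 + (t : ℂ) * s₁‖ ^ 2 ∂H) *
        Real.sqrt (∫ t, t ^ 2 / ‖1 + (t : ℂ) * s₂‖ ^ 2 ∂H) := by
  simp only [← Complex.norm_ofReal_div_one_add_ofReal_mul_sq] at hi₁ hi₂ ⊢
  simpa only [div_mul_div_comm, ← sq] using
    norm_integral_mul_le_sqrt_mul_sqrt (by fun_prop : Measurable _).aestronglyMeasurable
      (by fun_prop : Measurable _).aestronglyMeasurable hi₁ hi₂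

theorem Real.sqrt_div_add_lt_one {a x : ℝ} (ha : 0 ≤ a) (hx : 0 < x) :
    Real.sqrt (a / (x + a)) < 1 := by
  rw [Real.sqrt_lt' one_pos, one_pow, div_lt_one (by positivity)]
  linarith

theorem sqrt_im_mul_div_eq_norm_mul_sqrt {x b : ℝ} {s : ℂ} (hs : s.im ≠ 0)
    (h : x + s.im * b = s.im / Complex.normSq s) :
    Real.sqrt (s.im * b / (x + s.im * b)) = ‖s‖ * Real.sqrt b := by
  rw [h, Complex.normSq_eq_norm_sq, show s.im * b / (s.im / ‖s‖ ^ 2) = ‖s‖ ^ 2 * b by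
    field_simp, Real.sqrt_mul (sq_nonneg _), Real.sqrt_sq (norm_nonneg s)]

theorem stmt19_general (y : ℝ) (hy : 0 < y) (H : Measure ℝ)
    (z₁ z₂ s₁ s₂ : ℂ) (hz₁ : 0 < z₁.im) (hz₂ : 0 < z₂.im)
    (hs₁ : 0 < s₁.im) (hs₂ : 0 < s₂.im)
    (hi₁ : Integrable (fun t : ℝ => (t : ℂ) / (1 + (t : ℂ) * s₁)) H)
    (hi₂ : Integrable (fun t : ℝ => (t : ℂ) / (1 + (t : ℂ) * s₂)) H)
    (hi₃ : Integrable (fun t : ℝ => t ^ 2 / ‖(1 + (t : ℂ) * s₁)‖ ^ 2) H)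
    (hi₄ : Integrable (fun t : ℝ => t ^ 2 / ‖(1 + (t : ℂ) * s₂)‖ ^ 2) H)
    (heq₁ : s₁ = -(z₁ - (y : ℂ) * ∫ t, (t : ℂ) / (1 + (t : ℂ) * s₁) ∂H)⁻¹)
    (heq₂ : s₂ = -(z₂ - (y : ℂ) * ∫ t, (t : ℂ) / (1 + (t : ℂ) * s₂) ∂H)⁻¹)
    (A₁ A₂ : ℝ)
    (hA₁ : A₁ = s₁.im * (y * ∫ t, t ^ 2 / ‖(1 + (t : ℂ) * s₁)‖ ^ 2 ∂H))
    (hA₂ : A₂ = s₂.im * (y * ∫ t, t ^ 2 / ‖(1 + (t : ℂ) * s₂)‖ ^ 2 ∂H)) :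
    ‖((y : ℂ) * s₁ * s₂ *
        ∫ t, (t : ℂ) ^ 2 / ((1 + (t : ℂ) * s₁) * (1 + (t : ℂ) * s₂)) ∂H)‖ ≤
      Real.sqrt (A₁ / (z₁.im + A₁)) * Real.sqrt (A₂ / (z₂.im + A₂)) ∧
    Real.sqrt (A₁ / (z₁.im + A₁)) * Real.sqrt (A₂ / (z₂.im + A₂)) < 1 := by
  set B₁ := ∫ t, t ^ 2 / ‖1 + (t : ℂ) * s₁‖ ^ 2 ∂H
  set B₂ := ∫ t, t ^ 2 / ‖1 + (t : ℂ) * s₂‖ ^ 2 ∂H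
  subst hA₁ hA₂
  refine ⟨?_, mul_lt_one_of_nonneg_of_lt_one_left (Real.sqrt_nonneg _)
    (Real.sqrt_div_add_lt_one (by positivity) hz₁)
    (Real.sqrt_div_add_lt_one (by positivity) hz₂).le⟩
  rw [sqrt_im_mul_div_eq_norm_mul_sqrt hs₁.ne' (im_div_normSq_of_eq_neg_inv hi₁ heq₁),
    sqrt_im_mul_div_eq_norm_mul_sqrt hs₂.ne' (im_div_normSq_of_eq_neg_inv hi₂ heq₂),
    Real.sqrt_mul hy.le, Real.sqrt_mul hy.le]
  calc _ = ‖s₁‖ * ‖s₂‖ *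
        (y * ‖∫ t, (t : ℂ) ^ 2 / ((1 + t * s₁) * (1 + t * s₂)) ∂H‖) := by
        simp only [norm_mul, Complex.norm_real, Real.norm_of_nonneg hy.le]; ring
    _ ≤ ‖s₁‖ * ‖s₂‖ * (y * (Real.sqrt B₁ * Real.sqrt B₂)) := by
        gcongr; exact norm_integral_sq_div_le hi₃ hi₄
    _ = _ := by nth_rewrite 1 [← Real.mul_self_sqrt hy.le]; ring

theorem stmt19 (y τ : ℝ) (hy : 0 < y) (hτ : 0 ≤ τ) (H : Measure ℝ)
    [IsProbabilityMeasure H]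
    (hsupp₁ : H (Set.Iio 0) = 0) (hsupp₂ : H (Set.Ioi τ) = 0)
    (z₁ z₂ s₁ s₂ : ℂ) (hz₁ : 0 < z₁.im) (hz₂ : 0 < z₂.im)
    (hs₁ : 0 < s₁.im) (hs₂ : 0 < s₂.im)
    (hi₁ : Integrable (fun t : ℝ => (t : ℂ) / (1 + (t : ℂ) * s₁)) H)
    (hi₂ : Integrable (fun t : ℝ => (t : ℂ) / (1 + (t : ℂ) * s₂)) H)
    (hi₃ : Integrable (fun t : ℝ => t ^ 2 / ‖(1 + (t : ℂ) * s₁)‖ ^ 2) H)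
    (hi₄ : Integrable (fun t : ℝ => t ^ 2 / ‖(1 + (t : ℂ) * s₂)‖ ^ 2) H)
    (hi₅ : Integrable (fun t : ℝ =>
      ((t : ℂ) ^ 2 / ((1 + (t : ℂ) * s₁) * (1 + (t : ℂ) * s₂)))) H)
    (heq₁ : s₁ = -(z₁ - (y : ℂ) * ∫ t, (t : ℂ) / (1 + (t : ℂ) * s₁) ∂H)⁻¹)
    (heq₂ : s₂ = -(z₂ - (y : ℂ) * ∫ t, (t : ℂ) / (1 + (t : ℂ) * s₂) ∂H)⁻¹)
    (A₁ A₂ : ℝ)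
    (hA₁ : A₁ = s₁.im * (y * ∫ t, t ^ 2 / ‖(1 + (t : ℂ) * s₁)‖ ^ 2 ∂H))
    (hA₂ : A₂ = s₂.im * (y * ∫ t, t ^ 2 / ‖(1 + (t : ℂ) * s₂)‖ ^ 2 ∂H)) :
    ‖((y : ℂ) * s₁ * s₂ *
        ∫ t, (t : ℂ) ^ 2 / ((1 + (t : ℂ) * s₁) * (1 + (t : ℂ) * s₂)) ∂H)‖ ≤
      Real.sqrt (A₁ / (z₁.im + A₁)) * Real.sqrt (A₂ / (z₂.im + A₂)) ∧
    Real.sqrt (A₁ / (z₁.im + A₁)) * Real.sqrt (A₂ / (z₂.im + A₂)) < 1 :=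
  stmt19_general y hy H z₁ z₂ s₁ s₂ hz₁ hz₂ hs₁ hs₂ hi₁ hi₂ hi₃ hi₄ heq₁ heq₂ A₁ A₂ hA₁ hA₂
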